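/- Let V be a Euclidean n-dimensional space and let ε₁,…,εₙ be linearly independent unit vectors with ⟨εᵢ,εⱼ⟩ ≤ 0 for i ≠ j and 4⟨εᵢ,εⱼ⟩² ∈ {0,1,2,3} for i ≠ j. Then the graph on n vertices with 4⟨εᵢ,εⱼ⟩² edges between i and j contains no cycles (it is a forest). -/

import Mathlib

open scoped RealInnerProductSpace

/-!
If the graph had a cycle, let `v` be the sum of the `εᵢ` over its vertices. Every vertex `i` of
the cycle has two distinct neighbours `j`, `k` on it, and an edge forces `⟪εᵢ, εⱼ⟫ ≤ -1/2`, so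
`∑ⱼ ⟪εᵢ, εⱼ⟫ ≤ 1 - 1/2 - 1/2 = 0` over the cycle. Summing over `i` gives `‖v‖² ≤ 0`, i.e. a
vanishing linear combination of the `εᵢ` with all coefficients `1`.
-/

lemma le_neg_half_of_four_mul_sq_mem {x : ℝ} (hx : x ≤ 0) (hx0 : x ≠ 0)
    (h : 4 * x ^ 2 ∈ ({0, 1, 2, 3} : Set ℝ)) : x ≤ -1 / 2 := by
  have hsq : 1 ≤ 4 * x ^ 2 := by
    rcases h with h | h | h | h <;> simp_all
  nlinarith

namespace SimpleGraph.Walk.IsCycle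

variable {α : Type*} {G : SimpleGraph α} {u v : α} {p : G.Walk u u}

lemma exists_adj_adj_ne (hp : p.IsCycle) (hv : v ∈ p.support) :
    ∃ j ∈ p.support, ∃ k ∈ p.support, j ≠ k ∧ G.Adj v j ∧ G.Adj v k := by
  obtain ⟨j, k, hjk, hN⟩ := Set.ncard_eq_two.mp (hp.ncard_neighborSet_toSubgraph_eq_two hv)
  have hj : p.toSubgraph.Adj v j := by simp [← Subgraph.mem_neighborSet, hN]
  have hk : p.toSubgraph.Adj v k := by simp [← Subgraph.mem_neighborSet, hN]
  exact ⟨j, p.mem_support_of_adj_toSubgraph hj.symm, k, p.mem_support_of_adj_toSubgraph hk.symm,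
    hjk, hj.adj_sub, hk.adj_sub⟩

end SimpleGraph.Walk.IsCycle

section ObtuseUnitVectors

variable {ι V : Type*} [NormedAddCommGroup V] [InnerProductSpace ℝ V]

lemma sum_inner_nonpos_of_two_obtuse {ε : ι → V} {S : Finset ι} {i j k : ι}
    (hi : ‖ε i‖ = 1) (hneg : ∀ l ∈ S, i ≠ l → ⟪ε i, ε l⟫ ≤ 0) (hiS : i ∈ S) (hjS : j ∈ S)
    (hkS : k ∈ S) (hjk : j ≠ k) (hij : ⟪ε i, ε j⟫ ≤ -1 / 2) (hik : ⟪ε i, ε k⟫ ≤ -1 / 2) :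
    ∑ l ∈ S, ⟪ε i, ε l⟫ ≤ 0 := by
  classical
  have hii : ⟪ε i, ε i⟫ = 1 := by rw [real_inner_self_eq_norm_sq, hi, one_pow]
  have hij' : i ≠ j := by rintro rfl; linarith
  have hik' : i ≠ k := by rintro rfl; linarith
  have hT : {i, j, k} ⊆ S :=
    Finset.insert_subset hiS (Finset.insert_subset hjS (Finset.singleton_subset_iff.mpr hkS))
  have hrest : ∑ l ∈ S \ {i, j, k}, ⟪ε i, ε l⟫ ≤ 0 :=
    Finset.sum_nonpos fun l hl ↦ hneg l (Finset.sdiff_subset hl) (by rintro rfl; simp at hl)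
  rw [← Finset.sum_sdiff hT, Finset.sum_insert (by simp [hij', hik']),
    Finset.sum_pair hjk, hii]
  linarith

lemma sum_eq_zero_of_forall_two_obtuse {ε : ι → V} {S : Finset ι}
    (hunit : ∀ i ∈ S, ‖ε i‖ = 1) (hneg : ∀ i ∈ S, ∀ j ∈ S, i ≠ j → ⟪ε i, ε j⟫ ≤ 0)
    (htwo : ∀ i ∈ S, ∃ j ∈ S, ∃ k ∈ S, j ≠ k ∧ ⟪ε i, ε j⟫ ≤ -1 / 2 ∧ ⟪ε i, ε k⟫ ≤ -1 / 2) :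
    ∑ i ∈ S, ε i = 0 := by
  refine real_inner_self_nonpos.mp ?_
  rw [sum_inner]
  refine Finset.sum_nonpos fun i hi ↦ ?_
  obtain ⟨j, hj, k, hk, hjk, hij, hik⟩ := htwo i hi
  rw [inner_sum]
  exact sum_inner_nonpos_of_two_obtuse (hunit i hi) (hneg i hi) hi hj hk hjk hij hik

end ObtuseUnitVectors

/-- Let `ε₁, …, εₙ` be linearly independent unit vectors in a
Euclidean space with `⟪εᵢ, εⱼ⟫ ≤ 0` for `i ≠ j` and `4⟪εᵢ, εⱼ⟫² ∈ {0,1,2,3}` for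
`i ≠ j` (an *admissible* configuration).  Then the graph on `n` vertices joining `i`
and `j` by `4⟪εᵢ, εⱼ⟫²` edges contains no cycles (its underlying simple graph, with
`i ∼ j` iff `⟪εᵢ, εⱼ⟫ ≠ 0`, is a forest). -/
theorem admissible_configuration_graph_is_acyclic
    (V : Type*) [NormedAddCommGroup V] [InnerProductSpace ℝ V]
    (n : ℕ) (ε : Fin n → V)
    (hunit : ∀ i, ‖ε i‖ = 1) (hli : LinearIndependent ℝ ε)
    (hneg : ∀ i j, i ≠ j → ⟪ε i, ε j⟫ ≤ 0)
    (hint : ∀ i j, i ≠ j → 4 * ⟪ε i, ε j⟫ ^ 2 ∈ ({0, 1, 2, 3} : Set ℝ)) :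
    (SimpleGraph.fromRel fun i j => ⟪ε i, ε j⟫ ≠ 0).IsAcyclic := by
  intro u p hp
  classical
  have hedge : ∀ i j, (SimpleGraph.fromRel fun i j => ⟪ε i, ε j⟫ ≠ 0).Adj i j →
      ⟪ε i, ε j⟫ ≤ -1 / 2 := by
    rintro i j ⟨hij, h⟩
    have hne : ⟪ε i, ε j⟫ ≠ 0 := by simpa only [real_inner_comm (ε i), or_self] using h
    exact le_neg_half_of_four_mul_sq_mem (hneg i j hij) hne (hint i j hij)
  have hsum : ∑ i ∈ p.support.toFinset, ε i = 0 := by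
    refine sum_eq_zero_of_forall_two_obtuse (fun i _ ↦ hunit i) (fun i _ j _ ↦ hneg i j) ?_
    intro i hi
    obtain ⟨j, hj, k, hk, hjk, hij, hik⟩ := hp.exists_adj_adj_ne (List.mem_toFinset.mp hi)
    exact ⟨j, List.mem_toFinset.mpr hj, k, List.mem_toFinset.mpr hk, hjk, hedge i j hij,
      hedge i k hik⟩
  exact one_ne_zero <|
    linearIndependent_iff'.mp hli _ (fun _ ↦ 1) (by simpa using hsum) u (by simp)
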